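/- Let K be a finite set of natural numbers each of which is a power of 4 and let ℓ be a natural number. Let G be an ordered graph, and for each k ∈ K let P_k be a k-partition of G each of whose parts contains at least ℓ/k edges (i.e., k · |E(b_i, m_i, b_{i+1})| ≥ ℓ for every part), and let E_k denote the union over i ∈ {0, ..., k−1} of the part edge sets E(b_i, m_i, b_{i+1}) of P_k. Then for every k ∈ K, the set E_k \ (⋃_{k'∈K, k'<k} E_{k'}) contains at least ℓ/2 edges, i.e., 2 · |E_k \ ⋃_{k'∈K, k'<k} E_{k'}| ≥ ℓ. -/

import Mathlib

/-- An ordered graph on vertex set `{0, ..., N-1}`: every edge `(u, v)` satisfies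
`u < v` and `v < N`. -/
def IsOrderedGraph (N : ℕ) (E : Finset (ℕ × ℕ)) : Prop :=
  ∀ e ∈ E, e.1 < e.2 ∧ e.2 < N

/-- `E(a, m, b)`: the set of edges `(u, v) ∈ E` with `a ≤ u < m` and `m ≤ v < b`. -/
def edgesBetween (E : Finset (ℕ × ℕ)) (a m b : ℕ) : Finset (ℕ × ℕ) :=
  E.filter fun e => a ≤ e.1 ∧ e.1 < m ∧ m ≤ e.2 ∧ e.2 < b

/-- A `k`-partition of an ordered graph on `{0, ..., N-1}`: a sequence
`0 = b_0 ≤ m_0 ≤ b_1 ≤ m_1 ≤ ⋯ ≤ m_{k-1} ≤ b_k = N`. -/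
def IsPartition (N k : ℕ) (b m : ℕ → ℕ) : Prop :=
  b 0 = 0 ∧ b k = N ∧ ∀ i < k, b i ≤ m i ∧ m i ≤ b (i + 1)

/-- `E_k`: the union of the part edge sets of a `k`-partition given by `b, m`. -/
def partUnion (E : Finset (ℕ × ℕ)) (b m : ℕ → ℕ) (k : ℕ) : Finset (ℕ × ℕ) :=
  (Finset.range k).biUnion fun i => edgesBetween E (b i) (m i) (b (i + 1))

/-!
Fix `k = 4 ^ j` and call a part of `P_k` hit if it shares an edge with some `E_{k'}`, `k' < k`.
A shared edge `(u, v)` of part `i` of `P_k` and part `t` of `P_{k'}` satisfies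
`b_i ≤ u < m'_t ≤ v < b_{i+1}`, so the midpoint `m'_t` lies inside part `i`; as the parts are
disjoint intervals, distinct hit parts receive distinct midpoints. Hence there are at most
`∑_{k' < k} k' ≤ 1 + 4 + ⋯ + 4 ^ (j - 1) < k / 3` hit parts, so at least `k / 2` parts are
untouched, and these disjoint parts, each with at least `ℓ / k` edges, lie in `E_k \ ⋃ E_{k'}`.
-/

open Finset

lemma sum_mul_add_one_le_pow {x j : ℕ} {S : Finset ℕ}
    (hS : S ⊆ (range j).image ((x + 1) ^ ·)) :
    (∑ s ∈ S, s) * x + 1 ≤ (x + 1) ^ j := by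
  have hsum : ∑ s ∈ S, s ≤ ∑ t ∈ range j, (x + 1) ^ t :=
    (sum_le_sum_of_subset hS).trans (sum_image_le_of_nonneg fun _ _ ↦ Nat.zero_le _)
  calc (∑ s ∈ S, s) * x + 1 ≤ (∑ t ∈ range j, (x + 1) ^ t) * x + 1 := by gcongr
    _ = (x + 1) ^ j := geom_sum_mul_add x j

lemma mem_Ioo_of_not_disjoint_edgesBetween {E : Finset (ℕ × ℕ)} {a c d a' c' d' : ℕ}
    (h : ¬Disjoint (edgesBetween E a c d) (edgesBetween E a' c' d')) : c' ∈ Set.Ioo a d := by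
  obtain ⟨e, he, he'⟩ := not_disjoint_iff.mp h
  simp only [edgesBetween, mem_filter] at he he'
  exact ⟨by omega, by omega⟩

namespace IsPartition

variable {N k : ℕ} {b m : ℕ → ℕ}

lemma monotoneOn (hp : IsPartition N k b m) : MonotoneOn b (Set.Iic k) :=
  monotoneOn_of_le_succ Set.ordConnected_Iic fun i _ _ hi ↦ by
    rw [Order.succ_eq_add_one] at hi ⊢
    have ⟨hbm, hmb⟩ := hp.2.2 i (Nat.lt_of_succ_le (Set.mem_Iic.1 hi))
    exact hbm.trans hmb

lemma eq_of_mem_Ico (hp : IsPartition N k b m) {i i' x : ℕ} (hi : i < k) (hi' : i' < k)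
    (hx : x ∈ Set.Ico (b i) (b (i + 1))) (hx' : x ∈ Set.Ico (b i') (b (i' + 1))) : i = i' := by
  have hmono {i i' : ℕ} (hlt : i < i') (hi' : i' < k) : b (i + 1) ≤ b i' :=
    hp.monotoneOn (Set.mem_Iic.2 (by omega)) (Set.mem_Iic.2 hi'.le) hlt
  obtain hlt | rfl | hlt := lt_trichotomy i i'
  · have := hmono hlt hi'; simp only [Set.mem_Ico] at hx hx'; omega
  · rfl
  · have := hmono hlt hi; simp only [Set.mem_Ico] at hx hx'; omega

lemma pairwiseDisjoint_edgesBetween (hp : IsPartition N k b m) (E : Finset (ℕ × ℕ)) :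
    (range k : Set ℕ).PairwiseDisjoint fun i ↦ edgesBetween E (b i) (m i) (b (i + 1)) := by
  intro i hi i' hi' hne
  refine disjoint_left.2 fun e he he' ↦ hne ?_
  simp only [coe_range, Set.mem_Iio] at hi hi'
  simp only [edgesBetween, mem_filter] at he he'
  exact hp.eq_of_mem_Ico hi hi' ⟨he.2.1, by omega⟩ ⟨he'.2.1, by omega⟩

lemma card_filter_not_disjoint_le (hp : IsPartition N k b m) (E : Finset (ℕ × ℕ))
    (K' : Finset ℕ) (b' m' : ℕ → ℕ → ℕ) :
    #{i ∈ range k | ¬Disjoint (edgesBetween E (b i) (m i) (b (i + 1)))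
      (K'.biUnion fun k' ↦ partUnion E (b' k') (m' k') k')} ≤ ∑ k' ∈ K', k' := by
  -- a part of `b, m` meeting the part `t` of the `k'`-partition contains its midpoint `m' k' t`
  calc _ ≤ #(K'.sigma fun k' ↦ range k') :=
        card_le_card_of_forall_subsingleton
          (fun i p ↦ m' p.1 p.2 ∈ Set.Ioo (b i) (b (i + 1))) ?_ ?_
    _ = ∑ k' ∈ K', k' := by simp only [card_sigma, card_range]
  · intro i hi
    simp only [mem_filter, disjoint_biUnion_right, partUnion, not_forall] at hi
    obtain ⟨-, k', hk', t, ht, hmeet⟩ := hi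
    exact ⟨⟨k', t⟩, mem_sigma.2 ⟨hk', ht⟩, mem_Ioo_of_not_disjoint_edgesBetween hmeet⟩
  · rintro p - i ⟨hi, hpi⟩ i' ⟨hi', hpi'⟩
    exact hp.eq_of_mem_Ico (mem_range.1 (mem_filter.1 hi).1) (mem_range.1 (mem_filter.1 hi').1)
      (Set.Ioo_subset_Ico_self hpi) (Set.Ioo_subset_Ico_self hpi')

lemma card_filter_disjoint_mul_le (hp : IsPartition N k b m) (E U : Finset (ℕ × ℕ)) {ℓ : ℕ}
    (hdense : ∀ i < k, ℓ ≤ k * #(edgesBetween E (b i) (m i) (b (i + 1)))) :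
    #{i ∈ range k | Disjoint (edgesBetween E (b i) (m i) (b (i + 1))) U} * ℓ ≤
      k * #(partUnion E b m k \ U) := by
  set part := fun i ↦ edgesBetween E (b i) (m i) (b (i + 1))
  set free := {i ∈ range k | Disjoint (part i) U}
  have hfree : free.biUnion part ⊆ partUnion E b m k \ U := by
    refine biUnion_subset.2 fun i hi e he ↦ mem_sdiff.2 ⟨?_, ?_⟩
    · exact mem_biUnion.2 ⟨i, (mem_filter.1 hi).1, he⟩
    · exact disjoint_left.1 (mem_filter.1 hi).2 he
  calc #free * ℓ = ∑ i ∈ free, ℓ := by rw [sum_const, smul_eq_mul]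
    _ ≤ ∑ i ∈ free, k * #(part i) :=
        sum_le_sum fun i hi ↦ hdense i (mem_range.1 (mem_filter.1 hi).1)
    _ = k * #(free.biUnion part) := by
        rw [← mul_sum, card_biUnion ((hp.pairwiseDisjoint_edgesBetween E).subset
          (coe_subset.2 (filter_subset _ _)))]
    _ ≤ k * #(partUnion E b m k \ U) := by gcongr

end IsPartition

theorem stmt_10_general (N ℓ : ℕ) (E : Finset (ℕ × ℕ))
    (K : Finset ℕ) (hK : ∀ k ∈ K, ∃ j : ℕ, k = 4 ^ j)
    (b m : ℕ → ℕ → ℕ)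
    (hpart : ∀ k ∈ K, IsPartition N k (b k) (m k))
    (hdense : ∀ k ∈ K, ∀ i < k,
      ℓ ≤ k * (edgesBetween E (b k i) (m k i) (b k (i + 1))).card) :
    ∀ k ∈ K, ℓ ≤ 2 * ((partUnion E (b k) (m k) k) \
      (K.filter (fun k' => k' < k)).biUnion
        (fun k' => partUnion E (b k') (m k') k')).card := by
  intro k hk
  obtain ⟨j, hkj⟩ := hK k hk
  set lower := K.filter (· < k)
  set U := lower.biUnion fun k' ↦ partUnion E (b k') (m k') k'
  have hlower : lower ⊆ (range j).image ((3 + 1) ^ ·) := fun k' hk' ↦ by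
    obtain ⟨hk'K, hk'k⟩ := mem_filter.1 hk'
    obtain ⟨t, rfl⟩ := hK k' hk'K
    rw [hkj] at hk'k
    exact mem_image.2 ⟨t, mem_range.2 ((Nat.pow_lt_pow_iff_right (by norm_num)).1 hk'k), rfl⟩
  have hsplit := card_filter_add_card_filter_not (s := range k)
    fun i ↦ Disjoint (edgesBetween E (b k i) (m k i) (b k (i + 1))) U
  rw [card_range] at hsplit
  have hhit : #{i ∈ range k | ¬Disjoint (edgesBetween E (b k i) (m k i) (b k (i + 1))) U} ≤
      ∑ k' ∈ lower, k' :=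
    (hpart k hk).card_filter_not_disjoint_le E lower b m
  have hgeom : (∑ k' ∈ lower, k') * 3 + 1 ≤ k := hkj ▸ sum_mul_add_one_le_pow hlower
  have hfree := (hpart k hk).card_filter_disjoint_mul_le E U (hdense k hk)
  have hhalf :
      k ≤ 2 * #{i ∈ range k | Disjoint (edgesBetween E (b k i) (m k i) (b k (i + 1))) U} := by
    omega
  refine Nat.le_of_mul_le_mul_left ?_ (show 0 < k by omega)
  nlinarith

theorem stmt_10 (N ℓ : ℕ) (E : Finset (ℕ × ℕ)) (hE : IsOrderedGraph N E)
    (K : Finset ℕ) (hK : ∀ k ∈ K, ∃ j : ℕ, k = 4 ^ j)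
    (b m : ℕ → ℕ → ℕ)
    (hpart : ∀ k ∈ K, IsPartition N k (b k) (m k))
    (hdense : ∀ k ∈ K, ∀ i < k,
      ℓ ≤ k * (edgesBetween E (b k i) (m k i) (b k (i + 1))).card) :
    ∀ k ∈ K, ℓ ≤ 2 * ((partUnion E (b k) (m k) k) \
      (K.filter (fun k' => k' < k)).biUnion
        (fun k' => partUnion E (b k') (m k') k')).card :=
  stmt_10_general N ℓ E K hK b m hpart hdense
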